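/- q-binomial theorem: for complex a, z with |z| < 1 and 0 < |q| < 1, ∑_{n=0}^{∞} ((a; q)_n / (q; q)_n) z^n = (az; q)_∞ / (z; q)_∞. -/

import Mathlib

open Complex Filter Topology

/-- Finite q-Pochhammer symbol `(a; q)_n = ∏_{k=0}^{n-1} (1 - a q^k)`. -/
noncomputable def qPoch (a q : ℂ) (n : ℕ) : ℂ := ∏ k ∈ Finset.range n, (1 - a * q ^ k)

/-- Infinite q-Pochhammer symbol `(a; q)_∞ = ∏_{k=0}^∞ (1 - a q^k)`. -/
noncomputable def qPochInf (a q : ℂ) : ℂ := ∏' k : ℕ, (1 - a * q ^ k)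

lemma one_sub_ne_zero_of_norm_lt {x : ℂ} (h : ‖x‖ < 1) : (1 : ℂ) - x ≠ 0 := by
  intro h0
  have hx : x = 1 := by linear_combination -h0
  rw [hx] at h
  simp at h

lemma qPoch_q_ne_zero (q : ℂ) (hq1 : ‖q‖ < 1) (n : ℕ) : qPoch q q n ≠ 0 := by
  rw [qPoch]
  refine Finset.prod_ne_zero_iff.mpr fun k _ => one_sub_ne_zero_of_norm_lt ?_
  rw [norm_mul, norm_pow]
  calc ‖q‖ * ‖q‖ ^ k ≤ ‖q‖ * 1 := by
        have := pow_le_one₀ (norm_nonneg q) hq1.le (n := k)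
        nlinarith [norm_nonneg q]
    _ < 1 := by simpa using hq1

lemma summable_log_one_sub (w q : ℂ) (hq1 : ‖q‖ < 1) :
    Summable fun k : ℕ => Complex.log (1 - w * q ^ k) := by
  have hgeo : Summable fun k : ℕ => (3 / 2 : ℝ) * (‖w‖ * ‖q‖ ^ k) :=
    ((summable_geometric_of_lt_one (norm_nonneg q) hq1).mul_left ‖w‖).mul_left _
  refine hgeo.of_norm_bounded_eventually_nat ?_
  have h0 : Tendsto (fun k : ℕ => ‖w‖ * ‖q‖ ^ k) atTop (𝓝 (‖w‖ * 0)) :=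
    (tendsto_pow_atTop_nhds_zero_of_lt_one (norm_nonneg q) hq1).const_mul _
  rw [mul_zero] at h0
  filter_upwards [h0.eventually_lt_const (by norm_num : (0:ℝ) < 1/2)] with k hk
  have hnorm : ‖-(w * q ^ k)‖ ≤ 1 / 2 := by
    rw [norm_neg, norm_mul, norm_pow]; linarith
  have := Complex.norm_log_one_add_half_le_self hnorm
  rw [show (1 : ℂ) + -(w * q ^ k) = 1 - w * q ^ k by ring] at this
  calc ‖Complex.log (1 - w * q ^ k)‖ ≤ 3 / 2 * ‖-(w * q ^ k)‖ := this
    _ = 3 / 2 * (‖w‖ * ‖q‖ ^ k) := by rw [norm_neg, norm_mul, norm_pow]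

lemma hasProd_qPochInf (w q : ℂ) (hq1 : ‖q‖ < 1) :
    HasProd (fun k : ℕ => 1 - w * q ^ k) (qPochInf w q) := by
  by_cases h : ∃ k : ℕ, 1 - w * q ^ k = 0
  · obtain ⟨k0, hk0⟩ := h
    have h0 : HasProd (fun k : ℕ => 1 - w * q ^ k) 0 := by
      have hev : ∀ᶠ s : Finset ℕ in atTop, ∏ i ∈ s, (1 - w * q ^ i) = 0 := by
        filter_upwards [Filter.eventually_ge_atTop ({k0} : Finset ℕ)] with s hs
        exact Finset.prod_eq_zero (hs (Finset.mem_singleton_self k0)) hk0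
      exact Tendsto.congr' (hev.mono fun s hsf => hsf.symm) tendsto_const_nhds
    rw [qPochInf, h0.tprod_eq]
    exact h0
  · push_neg at h
    have hs := (summable_log_one_sub w q hq1).hasSum.cexp
    simp only [Function.comp_def] at hs
    have heq : (fun k : ℕ => cexp (Complex.log (1 - w * q ^ k)))
        = fun k : ℕ => 1 - w * q ^ k := funext fun k => Complex.exp_log (h k)
    rw [heq] at hs
    rw [qPochInf, hs.tprod_eq]
    exact hs

lemma qPochInf_ne_zero (w q : ℂ) (hw : ‖w‖ < 1) (hq1 : ‖q‖ < 1) : qPochInf w q ≠ 0 := by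
  have h : ∀ k : ℕ, (1 : ℂ) - w * q ^ k ≠ 0 := by
    intro k
    refine one_sub_ne_zero_of_norm_lt ?_
    rw [norm_mul, norm_pow]
    calc ‖w‖ * ‖q‖ ^ k ≤ ‖w‖ * 1 := by
          have := pow_le_one₀ (norm_nonneg q) hq1.le (n := k)
          nlinarith [norm_nonneg w]
      _ < 1 := by simpa using hw
  have hs := (summable_log_one_sub w q hq1).hasSum.cexp
  simp only [Function.comp_def] at hs
  have heq : (fun k : ℕ => cexp (Complex.log (1 - w * q ^ k)))
      = fun k : ℕ => 1 - w * q ^ k := funext fun k => Complex.exp_log (h k)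
  rw [heq] at hs
  rw [qPochInf, hs.tprod_eq]
  exact Complex.exp_ne_zero _

theorem q_binomial_theorem (a z q : ℂ) (hz : ‖z‖ < 1) (hq0 : 0 < ‖q‖) (hq1 : ‖q‖ < 1) :
    ∑' n : ℕ, (qPoch a q n / qPoch q q n) * z ^ n
      = qPochInf (a * z) q / qPochInf z q := by
  set c : ℕ → ℂ := fun n => qPoch a q n / qPoch q q n with hc
  -- basic facts
  have hc0 : c 0 = 1 := by simp [hc, qPoch]
  have hqn : ∀ n : ℕ, (1 : ℂ) - q ^ (n + 1) ≠ 0 := by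
    intro n
    refine one_sub_ne_zero_of_norm_lt ?_
    rw [norm_pow]
    exact pow_lt_one₀ (norm_nonneg q) hq1 n.succ_ne_zero
  have crec : ∀ n : ℕ, c (n + 1) * (1 - q ^ (n + 1)) = c n * (1 - a * q ^ n) := by
    intro n
    have h1 : qPoch a q (n + 1) = qPoch a q n * (1 - a * q ^ n) := Finset.prod_range_succ _ n
    have h2 : qPoch q q (n + 1) = qPoch q q n * (1 - q * q ^ n) := Finset.prod_range_succ _ n
    have hd1 : qPoch q q n ≠ 0 := qPoch_q_ne_zero q hq1 n
    have hd2 : qPoch q q (n + 1) ≠ 0 := qPoch_q_ne_zero q hq1 (n + 1)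
    have h2' : qPoch q q (n + 1) = qPoch q q n * (1 - q ^ (n + 1)) := by
      rw [h2, ← pow_succ']
    have key : c (n + 1) = c n * ((1 - a * q ^ n) / (1 - q ^ (n + 1))) := by
      simp only [hc]
      rw [h1, h2', mul_div_mul_comm]
    rw [key, mul_assoc, div_mul_cancel₀ _ (hqn n)]
  -- summability
  have hsum_base : Summable fun n : ℕ => ‖c n * z ^ n‖ := by
    refine summable_of_ratio_norm_eventually_le (r := (1 + ‖z‖) / 2) (by linarith) ?_
    have htend : Tendsto (fun n : ℕ => ‖z‖ * ‖1 - a * q ^ n‖ / ‖1 - q ^ (n + 1)‖) atTop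
        (𝓝 (‖z‖ * ‖(1 : ℂ) - a * 0‖ / ‖(1 : ℂ) - 0‖)) := by
      have hq0' : Tendsto (fun n : ℕ => q ^ n) atTop (𝓝 0) :=
        tendsto_pow_atTop_nhds_zero_of_norm_lt_one hq1
      have hq1' : Tendsto (fun n : ℕ => q ^ (n + 1)) atTop (𝓝 0) := by
        have := hq0'.const_mul q
        rw [mul_zero] at this
        refine this.congr fun n => by rw [pow_succ']
      have h1 : Tendsto (fun n : ℕ => ‖z‖ * ‖1 - a * q ^ n‖) atTop (𝓝 (‖z‖ * ‖(1:ℂ) - a * 0‖)) :=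
        (((hq0'.const_mul a).const_sub 1).norm).const_mul _
      have h2 : Tendsto (fun n : ℕ => ‖(1:ℂ) - q ^ (n + 1)‖) atTop (𝓝 ‖(1:ℂ) - 0‖) :=
        (hq1'.const_sub 1).norm
      exact h1.div h2 (by simp)
    have hlim : ‖z‖ * ‖(1 : ℂ) - a * 0‖ / ‖(1 : ℂ) - 0‖ = ‖z‖ := by simp
    rw [hlim] at htend
    filter_upwards [htend.eventually_le_const (by linarith : ‖z‖ < (1 + ‖z‖) / 2)] with n hn
    rw [norm_norm, norm_norm]
    have hid : c (n + 1) * z ^ (n + 1) * (1 - q ^ (n + 1)) = c n * z ^ n * (z * (1 - a * q ^ n)) := by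
      linear_combination z ^ (n + 1) * crec n
    have hnid : ‖c (n + 1) * z ^ (n + 1)‖ * ‖1 - q ^ (n + 1)‖
        = ‖c n * z ^ n‖ * (‖z‖ * ‖1 - a * q ^ n‖) := by
      rw [← norm_mul, ← norm_mul, ← norm_mul, hid]
    have hpos : 0 < ‖(1 : ℂ) - q ^ (n + 1)‖ := norm_pos_iff.mpr (hqn n)
    have hn' : ‖z‖ * ‖1 - a * q ^ n‖ ≤ (1 + ‖z‖) / 2 * ‖(1:ℂ) - q ^ (n + 1)‖ :=
      (div_le_iff₀ hpos).mp hn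
    nlinarith [norm_nonneg (c n * z ^ n), norm_nonneg (c (n + 1) * z ^ (n + 1))]
  have hsummable : ∀ w : ℂ, ‖w‖ ≤ ‖z‖ → Summable fun n : ℕ => c n * w ^ n := by
    intro w hw
    refine (Summable.of_norm_bounded hsum_base fun n => ?_).of_norm
    rw [norm_norm, norm_mul, norm_mul, norm_pow, norm_pow]
    exact mul_le_mul_of_nonneg_left (pow_le_pow_left₀ (norm_nonneg w) hw n) (norm_nonneg _)
  set F : ℂ → ℂ := fun w => ∑' n : ℕ, c n * w ^ n with hF
  -- functional equation
  have funEq : ∀ w : ℂ, ‖w‖ ≤ ‖z‖ → (1 - w) * F w = (1 - a * w) * F (q * w) := by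
    intro w hw
    have hsf : Summable fun n : ℕ => c n * w ^ n := hsummable w hw
    have hqw : ‖q * w‖ ≤ ‖z‖ := by
      rw [norm_mul]
      calc ‖q‖ * ‖w‖ ≤ 1 * ‖z‖ := by
            apply mul_le_mul hq1.le hw (norm_nonneg w) zero_le_one
        _ = ‖z‖ := one_mul _
    have hsg : Summable fun n : ℕ => c n * (q * w) ^ n := hsummable _ hqw
    have key : (∑' n : ℕ, c n * w ^ n) - (∑' n : ℕ, c n * (q * w) ^ n)
        = w * (∑' n : ℕ, c n * w ^ n) - (a * w) * (∑' n : ℕ, c n * (q * w) ^ n) := by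
      rw [← Summable.tsum_sub hsf hsg, Summable.tsum_eq_zero_add (hsf.sub hsg)]
      have h0 : c 0 * w ^ 0 - c 0 * (q * w) ^ 0 = 0 := by ring
      rw [h0, zero_add]
      have hterm : ∀ n : ℕ, c (n + 1) * w ^ (n + 1) - c (n + 1) * (q * w) ^ (n + 1)
          = w * (c n * w ^ n) - (a * w) * (c n * (q * w) ^ n) := by
        intro n
        have := crec n
        linear_combination w ^ (n + 1) * this
      rw [tsum_congr hterm, Summable.tsum_sub (hsf.mul_left w) (hsg.mul_left (a * w)),
        tsum_mul_left, tsum_mul_left]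
    simp only [hF]
    linear_combination key
  -- iteration
  have hwN : ∀ N : ℕ, ‖q ^ N * z‖ ≤ ‖z‖ := by
    intro N
    rw [norm_mul, norm_pow]
    calc ‖q‖ ^ N * ‖z‖ ≤ 1 * ‖z‖ :=
          mul_le_mul_of_nonneg_right (pow_le_one₀ (norm_nonneg q) hq1.le) (norm_nonneg z)
      _ = ‖z‖ := one_mul _
  have iter : ∀ N : ℕ, F z * ∏ k ∈ Finset.range N, (1 - z * q ^ k)
      = (∏ k ∈ Finset.range N, (1 - a * z * q ^ k)) * F (q ^ N * z) := by
    intro N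
    induction N with
    | zero => simp
    | succ N ih =>
      rw [Finset.prod_range_succ, Finset.prod_range_succ]
      have hfe := funEq (q ^ N * z) (hwN N)
      have hpow : q * (q ^ N * z) = q ^ (N + 1) * z := by ring
      rw [hpow] at hfe
      linear_combination (1 - z * q ^ N) * ih
        + (∏ k ∈ Finset.range N, (1 - a * z * q ^ k)) * hfe
  -- limits
  have tendsto_P : Tendsto (fun N : ℕ => ∏ k ∈ Finset.range N, (1 - a * z * q ^ k)) atTop
      (𝓝 (qPochInf (a * z) q)) := (hasProd_qPochInf (a * z) q hq1).tendsto_prod_nat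
  have tendsto_Q : Tendsto (fun N : ℕ => ∏ k ∈ Finset.range N, (1 - z * q ^ k)) atTop
      (𝓝 (qPochInf z q)) := (hasProd_qPochInf z q hq1).tendsto_prod_nat
  have tendsto_F : Tendsto (fun N : ℕ => F (q ^ N * z)) atTop (𝓝 1) := by
    set S : ℝ := ∑' n : ℕ, ‖c n * z ^ n‖ with hS
    have hbound : ∀ N : ℕ, ‖F (q ^ N * z) - 1‖ ≤ ‖q‖ ^ N * S := by
      intro N
      have hsw : Summable fun n : ℕ => c n * (q ^ N * z) ^ n := hsummable _ (hwN N)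
      have hFval : F (q ^ N * z) - 1 = ∑' n : ℕ, c (n + 1) * (q ^ N * z) ^ (n + 1) := by
        simp only [hF]
        rw [Summable.tsum_eq_zero_add hsw]
        simp [hc0]
      rw [hFval]
      have hnb : ∀ n : ℕ, ‖c (n + 1) * (q ^ N * z) ^ (n + 1)‖
          ≤ ‖q‖ ^ N * ‖c (n + 1) * z ^ (n + 1)‖ := by
        intro n
        rw [norm_mul, norm_mul, mul_pow, norm_mul, norm_pow, norm_pow, norm_pow]
        have h1 : (‖q‖ ^ N) ^ (n + 1) ≤ ‖q‖ ^ N := by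
          rw [← pow_mul]
          refine pow_le_pow_of_le_one (norm_nonneg q) hq1.le ?_
          nlinarith
        calc ‖c (n + 1)‖ * ((‖q‖ ^ N) ^ (n + 1) * ‖z‖ ^ (n + 1))
            ≤ ‖c (n + 1)‖ * (‖q‖ ^ N * ‖z‖ ^ (n + 1)) := by
              refine mul_le_mul_of_nonneg_left (mul_le_mul_of_nonneg_right h1 (by positivity))
                (norm_nonneg _)
          _ = ‖q‖ ^ N * (‖c (n + 1)‖ * ‖z‖ ^ (n + 1)) := by ring
      have htail : Summable fun n : ℕ => ‖c (n + 1) * z ^ (n + 1)‖ :=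
        (summable_nat_add_iff 1).mpr hsum_base
      have hsn : Summable fun n : ℕ => ‖q‖ ^ N * ‖c (n + 1) * z ^ (n + 1)‖ :=
        htail.mul_left _
      calc ‖∑' n : ℕ, c (n + 1) * (q ^ N * z) ^ (n + 1)‖
          ≤ ∑' n : ℕ, ‖c (n + 1) * (q ^ N * z) ^ (n + 1)‖ := by
            refine norm_tsum_le_tsum_norm ?_
            exact (hsn.of_nonneg_of_le (fun n => norm_nonneg _) hnb)
        _ ≤ ∑' n : ℕ, ‖q‖ ^ N * ‖c (n + 1) * z ^ (n + 1)‖ := by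
            refine Summable.tsum_le_tsum hnb ?_ hsn
            exact (hsn.of_nonneg_of_le (fun n => norm_nonneg _) hnb)
        _ = ‖q‖ ^ N * ∑' n : ℕ, ‖c (n + 1) * z ^ (n + 1)‖ := tsum_mul_left
        _ ≤ ‖q‖ ^ N * S := by
            refine mul_le_mul_of_nonneg_left ?_ (by positivity)
            rw [hS]
            have := (Summable.sum_add_tsum_nat_add (f := fun n => ‖c n * z ^ n‖) 1 hsum_base).symm
            have hnn : 0 ≤ ∑ i ∈ Finset.range 1, ‖c i * z ^ i‖ :=
              Finset.sum_nonneg fun i _ => norm_nonneg _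
            calc (∑' n : ℕ, ‖c (n + 1) * z ^ (n + 1)‖)
                ≤ (∑ i ∈ Finset.range 1, ‖c i * z ^ i‖) + ∑' n : ℕ, ‖c (n + 1) * z ^ (n + 1)‖ := by
                  linarith
              _ = S := Summable.sum_add_tsum_nat_add 1 hsum_base
    have htz : Tendsto (fun N : ℕ => ‖q‖ ^ N * S) atTop (𝓝 0) := by
      have := (tendsto_pow_atTop_nhds_zero_of_lt_one (norm_nonneg q) hq1).mul_const S
      rwa [zero_mul] at this
    have hnorm0 : Tendsto (fun N : ℕ => ‖F (q ^ N * z) - 1‖) atTop (𝓝 0) :=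
      squeeze_zero (fun N => norm_nonneg _) hbound htz
    rw [tendsto_iff_norm_sub_tendsto_zero]
    exact hnorm0
  have lim1 : Tendsto (fun N : ℕ => F z * ∏ k ∈ Finset.range N, (1 - z * q ^ k)) atTop
      (𝓝 (F z * qPochInf z q)) := tendsto_const_nhds.mul tendsto_Q
  have lim2 : Tendsto (fun N : ℕ => F z * ∏ k ∈ Finset.range N, (1 - z * q ^ k)) atTop
      (𝓝 (qPochInf (a * z) q * 1)) := by
    refine (tendsto_P.mul tendsto_F).congr fun N => (iter N).symm
  have heq : F z * qPochInf z q = qPochInf (a * z) q := by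
    have := tendsto_nhds_unique lim1 lim2
    rwa [mul_one] at this
  have hne : qPochInf z q ≠ 0 := qPochInf_ne_zero z q hz hq1
  rw [show (∑' n : ℕ, (qPoch a q n / qPoch q q n) * z ^ n) = F z from rfl]
  rw [eq_div_iff hne]
  exact heq
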